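/- Let g > 0 and let j ≥ 1 be an integer. If β_{j+1} < β < β_j, then there exist at least 2j pairwise distinct GP solutions on [0,L] with parameter β, none of which is identically zero. (Theorem 4.2(2): between consecutive quantum critical points β_{j+1} and β_j, the BEC system has at least 2j nontrivial quantum states.) -/

import Mathlib

open Set MeasureTheory intervalIntegral Filter Topology

/-- `φ` is a GP solution on `[a,b]` with parameter `β`:
`φ` is continuous on `[a,b]`, twice continuously differentiable on `(a,b)`,
satisfies `-(ℏ²/(4m))·φ'' + (β - ℏλ)·φ + g·φ³ = 0` on `(a,b)`,
and `φ a = φ b = 0`. -/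
def IsGPSolution (ℏ m lam g a b β : ℝ) (φ : ℝ → ℝ) : Prop :=
  ContinuousOn φ (Set.Icc a b) ∧
  ContDiffOn ℝ 2 φ (Set.Ioo a b) ∧
  (∀ x ∈ Set.Ioo a b,
    -(ℏ ^ 2 / (4 * m)) * deriv (deriv φ) x + (β - ℏ * lam) * φ x + g * (φ x) ^ 3 = 0) ∧
  φ a = 0 ∧ φ b = 0

/-- The quantum critical points `β_k = ℏλ - (ℏ²/(4m))·(kπ/L)²`. -/
noncomputable def betaCrit (ℏ m lam L : ℝ) (k : ℕ) : ℝ :=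
  ℏ * lam - (ℏ ^ 2 / (4 * m)) * ((k : ℝ) * Real.pi / L) ^ 2

/-!
With `c = ℏ²/(4m)` and `μ = ℏλ - β`, the hypothesis `β < β_j` says `c (nπ/L)² < μ` for
`n = 1, …, j`. Solutions of `c ψ'' = -μ ψ + g ψ³` are sought as `ψ = A sin θ`, where the phase
solves the autonomous equation `θ' = H_A(θ)`, `c H_A(τ)² = μ - g A² + (g A²/2) cos² τ`; then `ψ`
vanishes exactly where `θ ∈ πℤ`, and consecutive zeros are `P(A) = ∫₀^π dτ / H_A(τ)` apart.
`P(0) = π √(c/μ) < L/n`, `P` is continuous, and `P(A) → ∞` logarithmically as `g A² ↑ μ`, so some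
amplitude gives `P(A) = L/n`: a solution with `n` half-waves on `[0, L]`. These `j` solutions
are told apart by their first zeros `L/n`, and together with their negatives they give `2j`
distinct nontrivial solutions.
-/

open Real

theorem exists_strictMono_hasDerivAt_comp {H : ℝ → ℝ} (hH : Continuous H)
    (hpos : ∀ τ, 0 < H τ) {M : ℝ} (hM : ∀ τ, H τ ≤ M) :
    ∃ θ : ℝ → ℝ, StrictMono θ ∧ (∀ x, HasDerivAt θ (H (θ x)) x) ∧
      ∀ t, θ (∫ τ in 0..t, (H τ)⁻¹) = t := by
  set G : ℝ → ℝ := fun t => ∫ τ in 0..t, (H τ)⁻¹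
  have hG : ∀ t, HasDerivAt G (H t)⁻¹ t := fun t =>
    ((hH.inv₀ fun τ => (hpos τ).ne').integral_hasStrictDerivAt 0 t).hasDerivAt
  have hGmono : StrictMono G := strictMono_of_hasDerivAt_pos hG fun t => inv_pos.2 (hpos t)
  have hgrowth : ∀ ⦃s t⦄, s ≤ t → M⁻¹ * (t - s) ≤ G t - G s :=
    mul_sub_le_image_sub_of_le_deriv (fun t => (hG t).differentiableAt) fun t =>
      (hG t).deriv ▸ inv_anti₀ (hpos t) (hM t)
  have hM : 0 < M⁻¹ := inv_pos.2 ((hpos 0).trans_le (hM 0))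
  have hG0 : G 0 = 0 := integral_same
  have hsurj : Function.Surjective G := by
    refine Continuous.surjective (continuous_iff_continuousAt.2 fun t => (hG t).continuousAt) ?_ ?_
    · refine tendsto_atTop_mono' _ ?_ (tendsto_id.const_mul_atTop hM)
      filter_upwards [eventually_ge_atTop 0] with t ht
      simpa [hG0] using hgrowth ht
    · refine tendsto_atBot_mono' _ ?_ (tendsto_id.const_mul_atBot hM)
      filter_upwards [eventually_le_atBot 0] with t ht
      have := hgrowth ht
      simp only [hG0, id] at this ⊢
      linarith
  set e := hGmono.orderIsoOfSurjective G hsurj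
  refine ⟨e.symm, e.symm.strictMono, fun x => ?_, e.symm_apply_apply⟩
  simpa using HasDerivAt.of_local_left_inverse e.symm.continuous.continuousAt (hG (e.symm x))
    (inv_ne_zero (hpos _).ne') (Eventually.of_forall e.apply_symm_apply)

theorem contDiff_two_of_hasDerivAt_comp {H θ : ℝ → ℝ} (hH : ContDiff ℝ 1 H)
    (hθ : ∀ x, HasDerivAt θ (H (θ x)) x) : ContDiff ℝ 2 θ := by
  have hderiv : deriv θ = H ∘ θ := funext fun x => (hθ x).deriv
  have hdiff : Differentiable ℝ θ := fun x => (hθ x).differentiableAt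
  have hθ1 : ContDiff ℝ 1 θ := by
    rw [contDiff_one_iff_deriv, hderiv]
    exact ⟨hdiff, hH.continuous.comp hdiff.continuous⟩
  rw [show (2 : WithTop ℕ∞) = 1 + 1 from rfl, contDiff_succ_iff_deriv, hderiv]
  exact ⟨hdiff, by simp, hH.comp hθ1⟩

theorem integral_inv_add_mul {δ b T : ℝ} (hδ : 0 < δ) (hb : 0 < b) (hT : 0 ≤ T) :
    ∫ s in 0..T, (δ + b * s)⁻¹ = b⁻¹ * log ((δ + b * T) / δ) := by
  rw [intervalIntegral.integral_comp_add_mul (fun x => x⁻¹) hb.ne',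
    integral_inv_of_pos (by simpa using hδ) (by positivity)]
  simp

theorem betaCrit_antitone {ℏ m lam L : ℝ} (hm : 0 ≤ m) : Antitone (betaCrit ℏ m lam L) := by
  intro k l hkl
  unfold betaCrit
  rw [div_pow, div_pow]
  gcongr

theorem IsGPSolution.neg {ℏ m lam g a b β : ℝ} {φ : ℝ → ℝ}
    (h : IsGPSolution ℏ m lam g a b β φ) : IsGPSolution ℏ m lam g a b β (-φ) := by
  obtain ⟨hcont, hsmooth, hode, ha, hb⟩ := h
  refine ⟨hcont.neg, hsmooth.neg, fun x hx => ?_, by simp [ha], by simp [hb]⟩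
  have : deriv (deriv (-φ)) x = -deriv (deriv φ) x := by
    rw [deriv.neg', deriv.fun_neg]
  rw [this, Pi.neg_apply]
  linear_combination -hode x hx

/-- The profile `ψ = A sin θ` solves `c ψ'' = -μ ψ + g ψ³` when `θ' = gpPhaseSpeed c g μ A θ`:
this is the conserved energy `c ψ'² = (A² - ψ²) (μ - g (A² + ψ²) / 2)` written in the phase `θ`. -/
noncomputable def gpPhaseSpeed (c g μ A τ : ℝ) : ℝ :=
  √((μ - g * A ^ 2 + g * A ^ 2 / 2 * cos τ ^ 2) / c)

noncomputable def gpHalfPeriod (c g μ A : ℝ) : ℝ :=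
  ∫ τ in 0..π, (gpPhaseSpeed c g μ A τ)⁻¹

section PhaseSpeed

variable {c g μ A : ℝ}

theorem gpPhaseSpeed_periodic : Function.Periodic (gpPhaseSpeed c g μ A) π := by
  intro τ
  simp [gpPhaseSpeed, cos_add_pi]

variable (hc : 0 < c) (hg : 0 ≤ g)
include hc hg

theorem gpPhaseSpeed_le (τ : ℝ) : gpPhaseSpeed c g μ A τ ≤ √(μ / c) := by
  refine sqrt_le_sqrt (div_le_div_of_nonneg_right ?_ hc.le)
  nlinarith [cos_sq_le_one τ, mul_nonneg hg (sq_nonneg A)]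

variable (hA : g * A ^ 2 < μ)
include hA

theorem gpPhaseSpeed_radicand_pos (τ : ℝ) :
    0 < (μ - g * A ^ 2 + g * A ^ 2 / 2 * cos τ ^ 2) / c := by
  have : 0 ≤ g * A ^ 2 := by positivity
  have : 0 ≤ g * A ^ 2 / 2 * cos τ ^ 2 := by positivity
  exact div_pos (by linarith) hc

theorem gpPhaseSpeed_pos (τ : ℝ) : 0 < gpPhaseSpeed c g μ A τ :=
  sqrt_pos.2 (gpPhaseSpeed_radicand_pos hc hg hA τ)

theorem mul_gpPhaseSpeed_sq (τ : ℝ) :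
    c * gpPhaseSpeed c g μ A τ ^ 2 = μ - g * A ^ 2 + g * A ^ 2 / 2 * cos τ ^ 2 := by
  rw [gpPhaseSpeed, sq_sqrt (gpPhaseSpeed_radicand_pos hc hg hA τ).le]
  field_simp

theorem contDiff_gpPhaseSpeed : ContDiff ℝ 1 (gpPhaseSpeed c g μ A) :=
  ContDiff.sqrt (by fun_prop) fun τ => (gpPhaseSpeed_radicand_pos hc hg hA τ).ne'

theorem continuous_inv_gpPhaseSpeed : Continuous fun τ => (gpPhaseSpeed c g μ A τ)⁻¹ :=
  (contDiff_gpPhaseSpeed hc hg hA).continuous.inv₀ fun τ => (gpPhaseSpeed_pos hc hg hA τ).ne'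

theorem hasDerivAt_gpPhaseSpeed_comp {θ : ℝ → ℝ}
    (hθ : ∀ x, HasDerivAt θ (gpPhaseSpeed c g μ A (θ x)) x) (x : ℝ) :
    HasDerivAt (fun x => gpPhaseSpeed c g μ A (θ x))
      (-(g * A ^ 2 * sin (θ x) * cos (θ x)) / (2 * c)) x := by
  have hH := gpPhaseSpeed_pos hc hg hA (θ x)
  have hcos : HasDerivAt (fun x => cos (θ x)) (-sin (θ x) * gpPhaseSpeed c g μ A (θ x)) x :=
    (hθ x).cos
  convert (((hcos.pow 2).const_mul (g * A ^ 2 / 2)).const_add (μ - g * A ^ 2)).div_const c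
    |>.sqrt (gpPhaseSpeed_radicand_pos hc hg hA (θ x)).ne' using 1
  · rfl
  change _ = _ / (2 * gpPhaseSpeed c g μ A (θ x))
  field_simp
  ring

theorem gp_ode_of_hasDerivAt {θ : ℝ → ℝ}
    (hθ : ∀ x, HasDerivAt θ (gpPhaseSpeed c g μ A (θ x)) x) (x : ℝ) :
    c * deriv (deriv fun x => A * sin (θ x)) x
      = -μ * (A * sin (θ x)) + g * (A * sin (θ x)) ^ 3 := by
  have hderiv : deriv (fun x => A * sin (θ x))
      = fun x => A * (cos (θ x) * gpPhaseSpeed c g μ A (θ x)) :=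
    funext fun x => ((hθ x).sin.const_mul A).deriv
  rw [hderiv, (((hθ x).cos.fun_mul (hasDerivAt_gpPhaseSpeed_comp hc hg hA hθ x)).const_mul A).deriv]
  have hsq := mul_gpPhaseSpeed_sq hc hg hA (θ x)
  field_simp
  linear_combination (-2 * A) * sin (θ x) * hsq
    - 2 * g * A ^ 3 * sin (θ x) * sin_sq_add_cos_sq (θ x)

end PhaseSpeed

section HalfPeriod

variable {c g μ : ℝ}

theorem gpHalfPeriod_zero : gpHalfPeriod c g μ 0 = π / √(μ / c) := by
  simp [gpHalfPeriod, gpPhaseSpeed, div_eq_mul_inv]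

theorem continuousOn_gpHalfPeriod (hc : 0 < c) (hg : 0 ≤ g) :
    ContinuousOn (gpHalfPeriod c g μ) {A | g * A ^ 2 < μ} := by
  rw [continuousOn_iff_continuous_domRestrict]
  refine intervalIntegral.continuous_parametric_intervalIntegral_of_continuous'
    (f := fun (A : {A | g * A ^ 2 < μ}) τ => (gpPhaseSpeed c g μ A τ)⁻¹) ?_ 0 π
  refine Continuous.inv₀ (by unfold gpPhaseSpeed; fun_prop) ?_
  rintro ⟨A, τ⟩
  exact (gpPhaseSpeed_pos hc hg A.2 τ).ne'

theorem log_le_gpHalfPeriod {A δ : ℝ} (hc : 0 < c) (hg : 0 ≤ g) (hμ : 0 < μ) (hδ : 0 < δ)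
    (hA : g * A ^ 2 = μ - δ ^ 2) :
    √c / √(μ / 2) * log ((δ + √(μ / 2) * (π / 2)) / δ) ≤ gpHalfPeriod c g μ A := by
  set b := √(μ / 2)
  have hb : 0 < b := by positivity
  have hA' : g * A ^ 2 < μ := by nlinarith
  have hcont := continuous_inv_gpPhaseSpeed hc hg hA'
  -- near `τ = π/2` the speed is of order `δ + b |π/2 - τ|`, so its inverse has a log-divergent integral
  have hpt : ∀ s ∈ Icc 0 (π / 2), √c * (δ + b * s)⁻¹ ≤ (gpPhaseSpeed c g μ A (π / 2 - s))⁻¹ := by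
    rintro s ⟨hs0, hs⟩
    have hsin : sin s ^ 2 ≤ s ^ 2 :=
      pow_le_pow_left₀ (sin_nonneg_of_nonneg_of_le_pi hs0 (by linarith [pi_pos])) (sin_le hs0) 2
    have hsq := mul_gpPhaseSpeed_sq hc hg hA' (π / 2 - s)
    rw [cos_pi_div_two_sub, hA] at hsq
    have hbsq : b ^ 2 = μ / 2 := sq_sqrt (by positivity)
    have hle : √c * gpPhaseSpeed c g μ A (π / 2 - s) ≤ δ + b * s := by
      refine abs_le_of_sq_le_sq' ?_ (by positivity) |>.2
      rw [mul_pow, sq_sqrt hc.le, hsq]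
      nlinarith [mul_nonneg hδ.le (mul_nonneg hb.le hs0), sq_nonneg (sin s)]
    have hpos := gpPhaseSpeed_pos hc hg hA' (π / 2 - s)
    calc √c * (δ + b * s)⁻¹ ≤ √c * (√c * gpPhaseSpeed c g μ A (π / 2 - s))⁻¹ := by
          gcongr
      _ = _ := by field_simp
  calc √c / b * log ((δ + b * (π / 2)) / δ)
      = ∫ s in 0..π / 2, √c * (δ + b * s)⁻¹ := by
        rw [intervalIntegral.integral_const_mul, integral_inv_add_mul hδ hb (by positivity)]
        ring
    _ ≤ ∫ s in 0..π / 2, (gpPhaseSpeed c g μ A (π / 2 - s))⁻¹ := by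
        refine intervalIntegral.integral_mono_on (by positivity) ?_ ?_ hpt
        · refine (continuousOn_const.mul (ContinuousOn.inv₀ (by fun_prop) ?_)).intervalIntegrable
          intro s hs
          rw [uIcc_of_le (by positivity)] at hs
          have := hs.1
          positivity
        · exact (hcont.comp (continuous_sub_left _)).intervalIntegrable _ _
    _ = ∫ τ in 0..π / 2, (gpPhaseSpeed c g μ A τ)⁻¹ := by
        rw [intervalIntegral.integral_comp_sub_left (fun τ => (gpPhaseSpeed c g μ A τ)⁻¹)]
        simp
    _ ≤ gpHalfPeriod c g μ A :=
        intervalIntegral.integral_mono_interval le_rfl (by positivity) (by linarith [pi_pos])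
          (Eventually.of_forall fun τ => (inv_pos.2 (gpPhaseSpeed_pos hc hg hA' τ)).le)
          (hcont.intervalIntegrable _ _)

theorem exists_le_gpHalfPeriod (hc : 0 < c) (hg : 0 < g) (hμ : 0 < μ) (R : ℝ) :
    ∃ A, 0 ≤ A ∧ g * A ^ 2 < μ ∧ R ≤ gpHalfPeriod c g μ A := by
  set b := √(μ / 2)
  have hlog : Tendsto (fun δ => √c / b * log ((δ + b * (π / 2)) / δ)) (𝓝[>] 0) atTop := by
    refine (tendsto_log_atTop.comp ?_).const_mul_atTop (by positivity)
    simp only [div_eq_mul_inv]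
    refine Tendsto.pos_mul_atTop (C := b * (π / 2)) (by positivity) ?_ tendsto_inv_nhdsGT_zero
    exact ((continuous_add_const _).tendsto' 0 _ (zero_add _)).mono_left nhdsWithin_le_nhds
  obtain ⟨δ, hR, hδ, hδμ⟩ :=
    ((hlog.eventually_ge_atTop R).and (Ioo_mem_nhdsGT (sqrt_pos.2 hμ))).exists
  have hδ2 : δ ^ 2 < μ := (lt_sqrt hδ.le).1 hδμ
  have hA : g * √((μ - δ ^ 2) / g) ^ 2 = μ - δ ^ 2 := by
    rw [sq_sqrt (div_nonneg (by linarith) hg.le)]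
    field_simp
  refine ⟨_, sqrt_nonneg _, by rw [hA]; linarith [pow_pos hδ 2],
    hR.trans (log_le_gpHalfPeriod hc hg.le hμ hδ hA)⟩

theorem exists_gpHalfPeriod_eq (hc : 0 < c) (hg : 0 < g) (hμ : 0 < μ) {T : ℝ}
    (hT : gpHalfPeriod c g μ 0 < T) : ∃ A, 0 < A ∧ g * A ^ 2 < μ ∧ gpHalfPeriod c g μ A = T := by
  obtain ⟨A₁, hA₁, hA₁μ, hTA₁⟩ := exists_le_gpHalfPeriod hc hg hμ T
  have hsub : Icc 0 A₁ ⊆ {A | g * A ^ 2 < μ} := fun A hA =>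
    lt_of_le_of_lt (by gcongr; exacts [hA.1, hA.2]) hA₁μ
  obtain ⟨A, hA, hAT⟩ :=
    intermediate_value_Ioc hA₁ ((continuousOn_gpHalfPeriod hc hg.le).mono hsub) ⟨hT, hTA₁⟩
  exact ⟨A, hA.1, hsub (Ioc_subset_Icc_self hA), hAT⟩

end HalfPeriod

structure IsGPNodalProfile (c g μ L : ℝ) (n : ℕ) (ψ : ℝ → ℝ) : Prop where
  contDiff : ContDiff ℝ 2 ψ
  ode : ∀ x, c * deriv (deriv ψ) x = -μ * ψ x + g * ψ x ^ 3
  apply_zero : ψ 0 = 0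
  apply_L : ψ L = 0
  apply_node : ψ (L / n) = 0
  pos : ∀ x ∈ Ioo 0 (L / n), 0 < ψ x

theorem isGPNodalProfile_of_gpHalfPeriod_eq {c g μ A L : ℝ} {n : ℕ} (hc : 0 < c) (hg : 0 ≤ g)
    (hA₀ : 0 < A) (hA : g * A ^ 2 < μ) (hn : n ≠ 0) (hP : gpHalfPeriod c g μ A = L / n) :
    ∃ ψ, IsGPNodalProfile c g μ L n ψ := by
  obtain ⟨θ, hmono, hθ, hθG⟩ := exists_strictMono_hasDerivAt_comp
    (contDiff_gpPhaseSpeed hc hg hA).continuous (gpPhaseSpeed_pos hc hg hA) (gpPhaseSpeed_le hc hg)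
  have hperiod : ∀ k : ℕ, ∫ τ in 0..k * π, (gpPhaseSpeed c g μ A τ)⁻¹ = k * (L / n) := by
    intro k
    have := (gpPhaseSpeed_periodic (c := c) (g := g) (μ := μ) (A := A)).comp Inv.inv
      |>.intervalIntegral_add_zsmul_eq k 0 fun u v =>
        (continuous_inv_gpPhaseSpeed hc hg hA).intervalIntegrable u v
    simpa [← hP, gpHalfPeriod] using this
  have hθ0 : θ 0 = 0 := by simpa using hθG 0
  have hθnode : θ (L / n) = π := hP ▸ hθG π
  have hθL : θ L = n * π := by
    have := hperiod n ▸ hθG (n * π)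
    rwa [mul_div_cancel₀ _ (Nat.cast_ne_zero.2 hn)] at this
  refine ⟨fun x => A * sin (θ x), ?_, gp_ode_of_hasDerivAt hc hg hA hθ, by simp [hθ0],
    by simp [hθL, sin_nat_mul_pi], by simp [hθnode], fun x hx => ?_⟩
  · exact contDiff_const.mul (contDiff_sin.comp
      (contDiff_two_of_hasDerivAt_comp (contDiff_gpPhaseSpeed hc hg hA) hθ))
  · refine mul_pos hA₀ (sin_pos_of_pos_of_lt_pi ?_ ?_)
    · simpa [hθ0] using hmono hx.1
    · simpa [hθnode] using hmono hx.2

theorem exists_isGPNodalProfile {c g μ L : ℝ} {n : ℕ} (hc : 0 < c) (hg : 0 < g) (hL : 0 < L)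
    (hn : 0 < n) (hμ : c * (n * π / L) ^ 2 < μ) : ∃ ψ, IsGPNodalProfile c g μ L n ψ := by
  have hμ₀ : 0 < μ := lt_of_le_of_lt (by positivity) hμ
  have hroot : n * π / L < √(μ / c) := by
    rw [lt_sqrt (by positivity), lt_div_iff₀ hc, mul_comm]
    exact hμ
  have hT : gpHalfPeriod c g μ 0 < L / n := by
    rw [gpHalfPeriod_zero, div_lt_div_iff₀ (by positivity) (by positivity)]
    rw [div_lt_iff₀ hL] at hroot
    linarith
  obtain ⟨A, hA₀, hA, hP⟩ := exists_gpHalfPeriod_eq hc hg hμ₀ hT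
  exact isGPNodalProfile_of_gpHalfPeriod_eq hc hg.le hA₀ hA hn.ne' hP

namespace IsGPNodalProfile

variable {c g μ L : ℝ} {n : ℕ} {ψ : ℝ → ℝ}

theorem isGPSolution {ℏ m lam β : ℝ}
    (h : IsGPNodalProfile (ℏ ^ 2 / (4 * m)) g (ℏ * lam - β) L n ψ) :
    IsGPSolution ℏ m lam g 0 L β ψ :=
  ⟨h.contDiff.continuous.continuousOn, h.contDiff.contDiffOn,
    fun x _ => by linear_combination -h.ode x, h.apply_zero, h.apply_L⟩

theorem exists_ne_zero (h : IsGPNodalProfile c g μ L n ψ) (hL : 0 < L) (hn : 0 < n) :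
    ∃ x ∈ Icc 0 L, ψ x ≠ 0 := by
  have hn' : (1 : ℝ) ≤ n := by exact_mod_cast hn
  have hLn : 0 < L / n := by positivity
  refine ⟨L / n / 2, ⟨by positivity, ?_⟩, (h.pos _ ⟨by positivity, by linarith⟩).ne'⟩
  linarith [div_le_self hL.le hn']

theorem exists_ne_zero_eq_zero {c' g' μ' : ℝ} {n' : ℕ} {ψ' : ℝ → ℝ}
    (h : IsGPNodalProfile c g μ L n ψ) (h' : IsGPNodalProfile c' g' μ' L n' ψ') (hL : 0 < L)
    (hn : 0 < n) (hnn' : n < n') : ∃ x ∈ Icc 0 L, ψ x ≠ 0 ∧ ψ' x = 0 := by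
  have hn' : (1 : ℝ) ≤ n' := by exact_mod_cast hn.trans hnn'
  refine ⟨L / n', ⟨by positivity, div_le_self hL.le hn'⟩, (h.pos _ ⟨by positivity, ?_⟩).ne',
    h'.apply_node⟩
  exact div_lt_div_of_pos_left hL (by exact_mod_cast hn) (by exact_mod_cast hnn')

end IsGPNodalProfile

theorem exists_fin_two_mul_pm_family {α : Type*} {s : Set α} {j : ℕ} {P : (α → ℝ) → Prop}
    (hneg : ∀ f, P f → P (-f)) (ψ : Fin j → α → ℝ) (hψ : ∀ k, P (ψ k))
    (hne : ∀ k, ∃ x ∈ s, ψ k x ≠ 0)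
    (hsep : ∀ k k', k < k' → ∃ x ∈ s, ψ k x ≠ 0 ∧ ψ k' x = 0) :
    ∃ φ : Fin (2 * j) → α → ℝ, (∀ i, P (φ i)) ∧ (∀ i, ∃ x ∈ s, φ i x ≠ 0) ∧
      ∀ i i', i ≠ i' → ∃ x ∈ s, φ i x ≠ φ i' x := by
  let e : Fin (2 * j) ≃ Fin j ⊕ Fin j := (finCongr (two_mul j)).trans finSumFinEquiv.symm
  let F : Fin j ⊕ Fin j → α → ℝ := Sum.elim ψ fun k => -ψ k
  have hsep' : ∀ k k', k ≠ k' → ∃ x ∈ s, ψ k x ≠ 0 ∧ ψ k' x = 0 ∨ ψ k x = 0 ∧ ψ k' x ≠ 0 := by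
    intro k k' hkk'
    rcases hkk'.lt_or_gt with hlt | hlt
    · obtain ⟨x, hx, h⟩ := hsep k k' hlt
      exact ⟨x, hx, .inl h⟩
    · obtain ⟨x, hx, h, h'⟩ := hsep k' k hlt
      exact ⟨x, hx, .inr ⟨h', h⟩⟩
  have hFP : ∀ p, P (F p) := by
    rintro (k | k)
    exacts [hψ k, hneg _ (hψ k)]
  have hFne : ∀ p, ∃ x ∈ s, F p x ≠ 0 := by
    rintro (k | k) <;> obtain ⟨x, hx, h⟩ := hne k <;> exact ⟨x, hx, by simpa [F] using h⟩
  have hF : ∀ p q, p ≠ q → ∃ x ∈ s, F p x ≠ F q x := by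
    rintro (k | k) (k' | k') hpq <;> obtain rfl | hkk' := eq_or_ne k k'
    all_goals first
      | exact absurd rfl hpq
      | obtain ⟨x, hx, h⟩ := hne k; exact ⟨x, hx, by simp [F]; grind⟩
      | obtain ⟨x, hx, h⟩ := hsep' k k' hkk'; exact ⟨x, hx, by simp [F]; grind⟩
  exact ⟨F ∘ e, fun i => hFP (e i), fun i => hFne (e i), fun i i' h => hF _ _ (e.injective.ne h)⟩

theorem stmt_11_general (ℏ m lam L g : ℝ) (hℏ : 0 < ℏ) (hm : 0 < m) (hL : 0 < L)
    (hg : 0 < g) (j : ℕ) (β : ℝ)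
    (hβ₂ : β < betaCrit ℏ m lam L j) :
    ∃ φ : Fin (2 * j) → ℝ → ℝ,
      (∀ i, IsGPSolution ℏ m lam g 0 L β (φ i)) ∧
      (∀ i, ∃ x ∈ Set.Icc (0:ℝ) L, φ i x ≠ 0) ∧
      (∀ i i', i ≠ i' → ∃ x ∈ Set.Icc (0:ℝ) L, φ i x ≠ φ i' x) := by
  have hμ : ∀ k : Fin j, ℏ ^ 2 / (4 * m) * (((k + 1 : ℕ) : ℝ) * π / L) ^ 2 < ℏ * lam - β := by
    intro k
    have := hβ₂.trans_le (betaCrit_antitone hm.le (Nat.succ_le_of_lt k.2))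
    unfold betaCrit at this
    linarith
  choose ψ hψ using fun k : Fin j =>
    exists_isGPNodalProfile (by positivity) hg hL k.1.succ_pos (hμ k)
  exact exists_fin_two_mul_pm_family (fun _ h => h.neg) ψ (fun k => (hψ k).isGPSolution)
    (fun k => (hψ k).exists_ne_zero hL k.1.succ_pos)
    (fun k k' hkk' => (hψ k).exists_ne_zero_eq_zero (hψ k') hL k.1.succ_pos (by simpa using hkk'))

/-- Theorem 4.2(2): between consecutive quantum critical points
`β_{j+1}` and `β_j`, the BEC system has at least `2j` nontrivial quantum states. -/
theorem stmt_11 (ℏ m lam L g : ℝ) (hℏ : 0 < ℏ) (hm : 0 < m) (hL : 0 < L)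
    (hg : 0 < g) (j : ℕ) (hj : 1 ≤ j) (β : ℝ)
    (hβ₁ : betaCrit ℏ m lam L (j + 1) < β) (hβ₂ : β < betaCrit ℏ m lam L j) :
    ∃ φ : Fin (2 * j) → ℝ → ℝ,
      (∀ i, IsGPSolution ℏ m lam g 0 L β (φ i)) ∧
      (∀ i, ∃ x ∈ Set.Icc (0:ℝ) L, φ i x ≠ 0) ∧
      (∀ i i', i ≠ i' → ∃ x ∈ Set.Icc (0:ℝ) L, φ i x ≠ φ i' x) :=
  stmt_11_general ℏ m lam L g hℏ hm hL hg j β hβ₂
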